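/- Let P be a partition of a positive integer n and let (P_1, …, P_{r+1}; a_1, …, a_r) be a full U-process for P (i.e. P_{r+1} is the empty partition). Then for every 1 ≤ k ≤ r, s(P_k, a_k) = u_k(P) − u_{k−1}(P); that is, the sequence (s(P_1,a_1), s(P_2,a_2), …, s(P_r,a_r)) equals λ_U(P) (and in particular Σ_{k=1}^r s(P_k,a_k) = n, and any two full U-processes for P yield the same partition of n). -/

import Mathlib

/-!
Common definitions for the poset `D_P` attached to a partition `P` of `n`,
its `U`-chains, the quantity `s(P,a)` (cardinality of a simple `U`-chain),
and `U`-processes, following Khatami, "The poset of the nilpotent commutator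
of a nilpotent matrix".

A partition of `n` is encoded by its multiplicity function `np : ℕ →₀ ℕ`
(`np p` = number of parts equal to `p`), with `np 0 = 0` and `Σ p·np p = n`.
-/

/-- Vertices are triples `(u, p, k)`. -/
abbrev Vtx : Type := ℕ × ℕ × ℕ

/-- `np` is the multiplicity function of a partition of `n`. -/
def IsPartitionOf (n : ℕ) (np : ℕ →₀ ℕ) : Prop :=
  np 0 = 0 ∧ (np.sum fun p m => p * m) = n

/-- The vertex set of the diagram `D_P`: triples `(u,p,k)` with
`1 ≤ u ≤ p` and `1 ≤ k ≤ np p`. -/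
def vertexSet (np : ℕ →₀ ℕ) : Set Vtx :=
  {v | 1 ≤ v.1 ∧ v.1 ≤ v.2.1 ∧ 1 ≤ v.2.2 ∧ v.2.2 ≤ np v.2.1}

/-- The set `S_i` for the value `a`:
`S_i = {(u,p,k) : p ∈ {a, a+1}, i ≤ u ≤ p−i+1} ∪ {(u,p,k) : p > a+1, u ∈ {i, p−i+1}}`,
a subset of the vertex set of `D_P`.  (The condition `u ≤ p - i + 1` is written
as `u + i ≤ p + 1` to avoid truncated subtraction.) -/
def Sset (np : ℕ →₀ ℕ) (i a : ℕ) : Set Vtx :=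
  {v ∈ vertexSet np |
    ((v.2.1 = a ∨ v.2.1 = a + 1) ∧ i ≤ v.1 ∧ v.1 + i ≤ v.2.1 + 1) ∨
    (a + 1 < v.2.1 ∧ (v.1 = i ∨ v.1 + i = v.2.1 + 1))}

/-- The `r`-`U`-chain `U_{b 1, …, b r} = S_1 ∪ ⋯ ∪ S_r` in `D_P`. -/
def UChain (np : ℕ →₀ ℕ) (b : ℕ → ℕ) (r : ℕ) : Set Vtx :=
  ⋃ i ∈ Set.Icc 1 r, Sset np i (b i)

/-- `b 1 < b 2 < ⋯ < b r` are positive with consecutive differences at least `2`. -/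
def ValidSeq (b : ℕ → ℕ) (r : ℕ) : Prop :=
  (∀ i, 1 ≤ i → i ≤ r → 1 ≤ b i) ∧ ∀ i, 1 ≤ i → i < r → b i + 2 ≤ b (i + 1)

/-- `s(P,a) = a·n_a + (a+1)·n_{a+1} + 2·Σ_{p>a+1} n_p`, the cardinality of the
simple `U`-chain `U_a` in `D_P`. -/
def sVal (np : ℕ →₀ ℕ) (a : ℕ) : ℕ :=
  a * np a + (a + 1) * np (a + 1) +
    2 * ∑ p ∈ np.support.filter (fun p => a + 1 < p), np p

/-- `a` is optimal for `P`: `U_a` is a maximum simple `U`-chain in `D_P`. -/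
def OptimalFor (np : ℕ →₀ ℕ) (a : ℕ) : Prop :=
  1 ≤ a ∧ ∀ c, 1 ≤ c → sVal np c ≤ sVal np a

/-- `p` is a part of the partition with multiplicity function `np`. -/
def IsPart (np : ℕ →₀ ℕ) (p : ℕ) : Prop := 0 < p ∧ 0 < np p

/-- The covering relation of the poset `D_P`:  `Cov np x y` means `y` covers `x`.
(i)  for consecutive parts `q < p` and `1 ≤ u ≤ q`, `(u, p, np p)` is covered by `(u, q, 1)`;
(ii) for consecutive parts `p < q` and `1 ≤ u ≤ p`, `(u, p, np p)` is covered by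
     `(u + q − p, q, 1)`;
(iii) for a part `p`, `1 ≤ u ≤ p`, `1 ≤ k < np p`, `(u,p,k)` is covered by `(u,p,k+1)`;
(iv) for an isolated part `p` (neither `p−1` nor `p+1` is a part) and `1 ≤ u < p`,
     `(u, p, np p)` is covered by `(u+1, p, 1)`. -/
def Cov (np : ℕ →₀ ℕ) (x y : Vtx) : Prop :=
  (∃ p q u, IsPart np p ∧ IsPart np q ∧ q < p ∧
      (∀ t, q < t → t < p → ¬ IsPart np t) ∧
      1 ≤ u ∧ u ≤ q ∧ x = (u, p, np p) ∧ y = (u, q, 1)) ∨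
  (∃ p q u, IsPart np p ∧ IsPart np q ∧ p < q ∧
      (∀ t, p < t → t < q → ¬ IsPart np t) ∧
      1 ≤ u ∧ u ≤ p ∧ x = (u, p, np p) ∧ y = (u + (q - p), q, 1)) ∨
  (∃ p u k, IsPart np p ∧ 1 ≤ u ∧ u ≤ p ∧ 1 ≤ k ∧ k < np p ∧
      x = (u, p, k) ∧ y = (u, p, k + 1)) ∨
  (∃ p u, IsPart np p ∧ ¬ IsPart np (p - 1) ∧ ¬ IsPart np (p + 1) ∧
      1 ≤ u ∧ u < p ∧ x = (u, p, np p) ∧ y = (u + 1, p, 1))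

/-- The partial order of `D_P`: reflexive–transitive closure of the covering relation. -/
def leD (np : ℕ →₀ ℕ) : Vtx → Vtx → Prop := Relation.ReflTransGen (Cov np)

/-- A chain in `D_P`: a subset of the vertex set that is totally ordered by `leD`. -/
def IsChainD (np : ℕ →₀ ℕ) (C : Set Vtx) : Prop :=
  C ⊆ vertexSet np ∧ ∀ x ∈ C, ∀ y ∈ C, leD np x y ∨ leD np y x

/-- `u_r(P)`: the maximum cardinality of an `r`-`U`-chain in `D_P`. -/
noncomputable def uMax (np : ℕ →₀ ℕ) (r : ℕ) : ℕ :=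
  sSup {m | ∃ b : ℕ → ℕ, ValidSeq b r ∧ (UChain np b r).ncard = m}

/-- The relabeling injection `ι : D_{P'} → D_P` attached to removing `U_a`. -/
def iotaMap (a : ℕ) (v : Vtx) : Vtx :=
  if v.2.1 < a then v else (v.1 + 1, v.2.1 + 2, v.2.2)

/-- `iotaComp aa i = ι_1 ∘ ⋯ ∘ ι_i`, where `ι_j` is the relabeling map for `aa j`. -/
def iotaComp (aa : ℕ → ℕ) : ℕ → Vtx → Vtx
  | 0 => id
  | i + 1 => iotaComp aa i ∘ iotaMap (aa (i + 1))

/-- `(P_1, …, P_{r+1}; a_1, …, a_r)` is a `U`-process of length `r` for `P`: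
`P_1 = P`, each `a_i` is optimal for `P_i`, and `P_{i+1}` is obtained from `P_i`
by deleting the parts equal to `a_i` or `a_i + 1` and decreasing by `2` every
part greater than `a_i + 1`. -/
def IsUProcess (r : ℕ) (np : ℕ →₀ ℕ) (Ps : ℕ → ℕ →₀ ℕ) (aa : ℕ → ℕ) : Prop :=
  Ps 1 = np ∧
    ∀ i, 1 ≤ i → i ≤ r →
      OptimalFor (Ps i) (aa i) ∧
        ∀ m, Ps (i + 1) m = if m < aa i then Ps i m else Ps i (m + 2)

/-- The subset `C_i = (ι_1 ∘ ⋯ ∘ ι_{i−1})(U_{a_i}) ⊆ D_P` of a `U`-process. -/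
def Cset (Ps : ℕ → ℕ →₀ ℕ) (aa : ℕ → ℕ) (i : ℕ) : Set Vtx :=
  iotaComp aa (i - 1) '' Sset (Ps i) 1 (aa i)

/-!
For a valid sequence `b` the sets `S_i` are disjoint and
`|S_i| = s(P, b_i) - 2(i-1)(n_{b_i} + n_{b_i+1})`, so the size of a `U`-chain is arithmetic in
the multiplicities. Let `a` be optimal for `P` and let `P'` be the next partition of the process.
A piece with value `≤ a - 2` has exactly `2(n_a + n_{a+1})` more points for `P` than for `P'`,
and the piece of a value `v ≥ a` at position `i` for `P'` has the size of the piece of `v + 2`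
at position `i + 1` for `P`. Hence inserting `a` into an `m`-chain of `P'` (or `a + 1` right
after a value `a - 1`, which the removal of `a, a + 1` has made adjacent to `a + 2`) yields an
`(m+1)`-chain of `P` with exactly `s(P,a)` more points. Conversely, from any `(m+1)`-chain of `P`
one value can be removed (or the pair `a - 1, a + 1` merged) at a cost of at most `s(P,a)`; this
is where optimality of `a` enters. So `u_{m+1}(P) = s(P,a) + u_m(P')`, and the theorem follows by
telescoping along the process.
-/

open Finset

def tail (np : ℕ →₀ ℕ) (x : ℕ) : ℕ := ∑ p ∈ np.support.filter (x < ·), np p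

theorem sVal_eq_tail (np : ℕ →₀ ℕ) (a : ℕ) :
    sVal np a = a * np a + (a + 1) * np (a + 1) + 2 * tail np (a + 1) := rfl

theorem Finsupp.exists_forall_ge_eq_zero (np : ℕ →₀ ℕ) : ∃ N, ∀ m, N ≤ m → np m = 0 :=
  ⟨np.support.sup id + 1, fun m hm => Finsupp.notMem_support_iff.1 fun hmem => by
    have := Finset.le_sup (f := id) hmem
    simp only [id] at this
    omega⟩

theorem tail_eq_sum_Ico {np : ℕ →₀ ℕ} {N : ℕ} (hN : ∀ m, N ≤ m → np m = 0) (x : ℕ) :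
    tail np x = ∑ p ∈ Ico (x + 1) N, np p := by
  refine Finset.sum_subset (fun p hp => ?_) (fun p hIco hp => ?_)
  · simp only [mem_filter, Finsupp.mem_support_iff] at hp
    have : p < N := by_contra fun h => hp.1 (hN p (by omega))
    simp only [mem_Ico]
    omega
  · simp only [mem_filter, Finsupp.mem_support_iff, not_and] at hp
    exact by_contra fun h0 => hp h0 (by simp only [mem_Ico] at *; omega)

theorem tail_eq_add_tail_succ (np : ℕ →₀ ℕ) (x : ℕ) :
    tail np x = np (x + 1) + tail np (x + 1) := by
  obtain ⟨N, hN⟩ := np.exists_forall_ge_eq_zero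
  have hN' : ∀ m, N + x + 2 ≤ m → np m = 0 := fun m hm => hN m (by omega)
  rw [tail_eq_sum_Ico hN', tail_eq_sum_Ico hN', sum_eq_sum_Ico_succ_bot (by omega)]

def IsUStep (a : ℕ) (np np' : ℕ →₀ ℕ) : Prop :=
  ∀ m, np' m = if m < a then np m else np (m + 2)

namespace IsUStep

variable {a : ℕ} {np np' : ℕ →₀ ℕ}

theorem apply_of_lt (h : IsUStep a np np') {m : ℕ} (hm : m < a) : np' m = np m := by
  rw [h m, if_pos hm]

theorem apply_of_le (h : IsUStep a np np') {m : ℕ} (hm : a ≤ m) : np' m = np (m + 2) := by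
  rw [h m, if_neg (by omega)]

theorem tail_of_le (h : IsUStep a np np') {x : ℕ} (hx : a ≤ x + 1) :
    tail np' x = tail np (x + 2) := by
  obtain ⟨N, hN⟩ := np.exists_forall_ge_eq_zero
  have hN' : ∀ m, N ≤ m → np' m = 0 := fun m hm => by
    rw [h m]; split_ifs <;> exact hN _ (by omega)
  have hN2 : ∀ m, N + 2 ≤ m → np m = 0 := fun m hm => hN m (by omega)
  rw [tail_eq_sum_Ico hN', tail_eq_sum_Ico hN2, show x + 2 + 1 = x + 1 + 2 by ring,
    ← sum_Ico_add' (fun p => np p)]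
  exact sum_congr rfl fun p hp => h.apply_of_le (by simp only [mem_Ico] at hp; omega)

theorem tail_of_lt (h : IsUStep a np np') {x : ℕ} (hx : x + 1 ≤ a) :
    tail np x = tail np' x + (np a + np (a + 1)) := by
  induction hd : a - (x + 1) generalizing x with
  | zero =>
    obtain rfl : a = x + 1 := by omega
    rw [tail_eq_add_tail_succ, tail_eq_add_tail_succ np (x + 1), h.tail_of_le le_rfl]
    ring
  | succ d ih =>
    rw [tail_eq_add_tail_succ, tail_eq_add_tail_succ np', ih (by omega) (by omega),
      h.apply_of_lt (by omega : x + 1 < a)]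
    ring

end IsUStep

/-- `|S_i|` for the value `v` (see `card_sFinset`): `v + 2 - 2i` points in each column of length
`v`, `v + 3 - 2i` in each column of length `v + 1`, and two in each longer column. -/
def pieceCard (np : ℕ →₀ ℕ) (i v : ℕ) : ℕ :=
  (v + 2 - 2 * i) * np v + (v + 3 - 2 * i) * np (v + 1) + 2 * tail np (v + 1)

theorem pieceCard_one (np : ℕ →₀ ℕ) (v : ℕ) : pieceCard np 1 v = sVal np v := by
  rw [pieceCard, sVal_eq_tail, show v + 2 - 2 * 1 = v by omega,
    show v + 3 - 2 * 1 = v + 1 by omega]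

theorem pieceCard_add_eq_sVal (np : ℕ →₀ ℕ) {i v : ℕ} (hi : 1 ≤ i) (hv : 2 * i ≤ v + 1) :
    pieceCard np i v + 2 * (i - 1) * (np v + np (v + 1)) = sVal np v := by
  rw [pieceCard, sVal_eq_tail]
  zify [hi, hv, (by omega : 2 * i ≤ v + 2), (by omega : 2 * i ≤ v + 3)]
  ring

theorem pieceCard_eq_succ_add (np : ℕ →₀ ℕ) {i v : ℕ} (hv : 2 * (i + 1) ≤ v + 2) :
    pieceCard np i v = pieceCard np (i + 1) v + 2 * (np v + np (v + 1)) := by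
  unfold pieceCard
  zify [hv, (by omega : 2 * i ≤ v + 2), (by omega : 2 * i ≤ v + 3),
    (by omega : 2 * (i + 1) ≤ v + 3)]
  ring

namespace IsUStep

variable {a : ℕ} {np np' : ℕ →₀ ℕ}

theorem pieceCard_of_lt (h : IsUStep a np np') (i : ℕ) {v : ℕ} (hv : v + 2 ≤ a) :
    pieceCard np i v = pieceCard np' i v + 2 * (np a + np (a + 1)) := by
  unfold pieceCard
  rw [h.apply_of_lt (by omega : v < a), h.apply_of_lt (by omega : v + 1 < a),
    h.tail_of_lt (by omega : v + 1 + 1 ≤ a)]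
  ring

theorem pieceCard_of_le (h : IsUStep a np np') (i : ℕ) {v : ℕ} (hv : a ≤ v) :
    pieceCard np' i v = pieceCard np (i + 1) (v + 2) := by
  unfold pieceCard
  rw [h.apply_of_le hv, h.apply_of_le (by omega : a ≤ v + 1), h.tail_of_le (by omega),
    show v + 2 + 2 - 2 * (i + 1) = v + 2 - 2 * i by omega,
    show v + 2 + 3 - 2 * (i + 1) = v + 3 - 2 * i by omega]

theorem pieceCard_pair (h : IsUStep a np np') {t : ℕ} (ht : 2 * t + 2 ≤ a) :
    pieceCard np (t + 1) (a - 1) + pieceCard np (t + 2) (a + 1) + 2 * t * (np a + np (a + 1)) =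
      sVal np a + pieceCard np' (t + 1) (a - 1) := by
  unfold pieceCard
  rw [sVal_eq_tail, h.apply_of_lt (by omega : a - 1 < a), show a - 1 + 1 = a by omega,
    h.apply_of_le le_rfl, h.tail_of_le (Nat.le_succ a), tail_eq_add_tail_succ np a,
    tail_eq_add_tail_succ np (a + 1)]
  zify [(by omega : 2 * (t + 1) ≤ a - 1 + 2), (by omega : 2 * (t + 1) ≤ a - 1 + 3),
    (by omega : 2 * (t + 2) ≤ a + 1 + 2), (by omega : 2 * (t + 2) ≤ a + 1 + 3),
    (by omega : 1 ≤ a)]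
  ring

end IsUStep

namespace ValidSeq

variable {b : ℕ → ℕ} {k : ℕ}

theorem add_two_mul_le (hb : ValidSeq b k) {i j : ℕ} (hi : 1 ≤ i) (hij : i ≤ j) (hj : j ≤ k) :
    b i + 2 * (j - i) ≤ b j := by
  induction j, hij using Nat.le_induction with
  | base => simp
  | succ j hij ih =>
    have := hb.2 j (by omega) (by omega)
    have := ih (by omega)
    omega

theorem two_mul_le (hb : ValidSeq b k) {i : ℕ} (hi : 1 ≤ i) (hik : i ≤ k) :
    2 * i ≤ b i + 1 := by
  have := hb.1 1 le_rfl (by omega)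
  have := hb.add_two_mul_le le_rfl hi hik
  omega

theorem exists_split (hb : ValidSeq b k) (a : ℕ) :
    ∃ t ≤ k, (∀ i, 1 ≤ i → i ≤ t → b i + 2 ≤ a) ∧ ∀ i, t < i → i ≤ k → a ≤ b i + 1 := by
  classical
  obtain ⟨t, ht⟩ : ∃ t, Nat.findGreatest (fun i => b i + 2 ≤ a) k = t := ⟨_, rfl⟩
  have htk : t ≤ k := ht ▸ Nat.findGreatest_le k
  refine ⟨t, htk, fun i hi hit => ?_, fun i hti hik => ?_⟩
  · have hbt : b t + 2 ≤ a :=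
      Nat.findGreatest_of_ne_zero (P := fun i => b i + 2 ≤ a) ht (by omega)
    have := hb.add_two_mul_le hi hit htk
    omega
  · have : ¬ b i + 2 ≤ a :=
      Nat.findGreatest_is_greatest (P := fun i => b i + 2 ≤ a) (ht ▸ hti) hik
    omega

end ValidSeq

theorem validSeq_two_mul_sub_one (k : ℕ) : ValidSeq (fun i => 2 * i - 1) k :=
  ⟨fun i hi _ => by dsimp only; omega, fun i hi _ => by dsimp only; omega⟩

/-- The `u`-coordinates of `S_i` (for the value `a`) in the columns of parts equal to `p`. -/
def sColumn (i a p : ℕ) : Finset ℕ :=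
  if p = a ∨ p = a + 1 then Icc i (p + 1 - i) else if a + 1 < p then {i, p + 1 - i} else ∅

theorem card_sColumn {i a p : ℕ} (hi : 1 ≤ i) (hia : 2 * i ≤ a + 1) :
    (sColumn i a p).card = if p = a then a + 2 - 2 * i else if p = a + 1 then a + 3 - 2 * i
      else if a + 1 < p then 2 else 0 := by
  unfold sColumn
  split_ifs <;> first
    | omega
    | (simp only [Nat.card_Icc]; omega)
    | rw [card_pair (by omega)]
    | rfl

theorem disjoint_sColumn {i j ai aj p : ℕ} (hi : 1 ≤ i) (hij : i < j) (hia : 2 * i ≤ ai + 1)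
    (hgap : ai + 2 * (j - i) ≤ aj) : Disjoint (sColumn i ai p) (sColumn j aj p) := by
  rw [Finset.disjoint_left]
  intro u hu1 hu2
  unfold sColumn at hu1 hu2
  split_ifs at hu1 hu2 <;>
    simp only [mem_Icc, mem_insert, mem_singleton, notMem_empty] at hu1 hu2 <;> omega

def sFinset (np : ℕ →₀ ℕ) (i a : ℕ) : Finset Vtx :=
  np.support.biUnion fun p => sColumn i a p ×ˢ {p} ×ˢ Icc 1 (np p)

theorem mem_sFinset {np : ℕ →₀ ℕ} {i a : ℕ} {v : Vtx} :
    v ∈ sFinset np i a ↔ v.1 ∈ sColumn i a v.2.1 ∧ 1 ≤ v.2.2 ∧ v.2.2 ≤ np v.2.1 := by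
  obtain ⟨u, p, k⟩ := v
  simp only [sFinset, mem_biUnion, Finsupp.mem_support_iff, mem_product, mem_singleton, mem_Icc]
  constructor
  · rintro ⟨q, -, hu, rfl, hk⟩
    exact ⟨hu, hk⟩
  · rintro ⟨hu, hk⟩
    exact ⟨p, by omega, hu, rfl, hk⟩

theorem coe_sFinset (np : ℕ →₀ ℕ) {i a : ℕ} (hi : 1 ≤ i) (hia : 2 * i ≤ a + 1) :
    (sFinset np i a : Set Vtx) = Sset np i a := by
  ext ⟨u, p, k⟩
  simp only [mem_coe, mem_sFinset, Sset, vertexSet, Set.mem_ofPred_eq, sColumn]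
  split_ifs <;> simp only [mem_Icc, mem_insert, mem_singleton, notMem_empty, false_and,
    false_iff] <;> omega

theorem card_sFinset (np : ℕ →₀ ℕ) {i a : ℕ} (hi : 1 ≤ i) (hia : 2 * i ≤ a + 1) :
    (sFinset np i a).card = pieceCard np i a := by
  rw [sFinset, card_biUnion fun p _ q _ hpq => by
    simp only [Finset.disjoint_left, mem_product, mem_singleton]
    exact fun v hp hq => hpq (hp.2.1.symm.trans hq.2.1)]
  have hcol : ∀ p, (sColumn i a p ×ˢ {p} ×ˢ Icc 1 (np p)).card =
      (if p = a then (a + 2 - 2 * i) * np a else 0) +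
        (if p = a + 1 then (a + 3 - 2 * i) * np (a + 1) else 0) +
          (if a + 1 < p then 2 * np p else 0) := by
    intro p
    rw [card_product, card_product, card_singleton, Nat.card_Icc, Nat.add_sub_cancel, one_mul,
      card_sColumn hi hia]
    split_ifs <;> subst_vars <;> omega
  simp only [hcol, sum_add_distrib, sum_ite_eq', Finsupp.mem_support_iff, ← sum_filter,
    ← mul_sum]
  rw [pieceCard]
  congr 2 <;> split_ifs with h <;> simp_all

theorem ncard_UChain (np : ℕ →₀ ℕ) {b : ℕ → ℕ} {k : ℕ} (hb : ValidSeq b k) :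
    (UChain np b k).ncard = ∑ i ∈ Icc 1 k, pieceCard np i (b i) := by
  have hunion : UChain np b k = ↑((Icc 1 k).biUnion fun i => sFinset np i (b i)) := by
    ext v
    simp only [UChain, Set.mem_iUnion, Set.mem_Icc, coe_biUnion, mem_coe, mem_Icc, exists_prop]
    refine exists_congr fun i => and_congr_right fun hi => ?_
    rw [← coe_sFinset np hi.1 (hb.two_mul_le hi.1 hi.2), mem_coe]
  have hlt : ∀ i j, 1 ≤ i → i < j → j ≤ k →
      Disjoint (sFinset np i (b i)) (sFinset np j (b j)) :=
    fun i j hi hij hj => Finset.disjoint_left.2 fun v hvi hvj => by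
      rw [mem_sFinset] at hvi hvj
      exact Finset.disjoint_left.1 (disjoint_sColumn hi hij (hb.two_mul_le hi (by omega))
        (hb.add_two_mul_le hi hij.le hj)) hvi.1 hvj.1
  have hdisj : (Icc 1 k : Set ℕ).PairwiseDisjoint fun i => sFinset np i (b i) := by
    intro i hi j hj hij
    simp only [coe_Icc, Set.mem_Icc] at hi hj
    rcases Nat.lt_or_gt_of_ne hij with h | h
    · exact hlt i j hi.1 h hj.2
    · exact (hlt j i hj.1 h hi.2).symm
  rw [hunion, Set.ncard_coe_finset, card_biUnion hdisj]
  exact sum_congr rfl fun i hi => by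
    rw [mem_Icc] at hi
    exact card_sFinset np hi.1 (hb.two_mul_le hi.1 hi.2)

theorem finite_vertexSet (np : ℕ →₀ ℕ) : (vertexSet np).Finite := by
  refine (np.support.biUnion fun p => Icc 1 p ×ˢ {p} ×ˢ Icc 1 (np p)).finite_toSet.subset ?_
  rintro ⟨u, p, k⟩ ⟨hu1, hup, hk1, hkp⟩
  dsimp only at hu1 hup hk1 hkp
  simp only [coe_biUnion, mem_coe, Finsupp.mem_support_iff, coe_product, coe_Icc, coe_singleton,
    Set.mem_iUnion, Set.mem_prod, Set.mem_Icc, Set.mem_singleton_iff, exists_prop]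
  exact ⟨p, by omega, ⟨hu1, hup⟩, rfl, hk1, hkp⟩

theorem bddAbove_uChainCards (np : ℕ →₀ ℕ) (k : ℕ) :
    BddAbove {m | ∃ b : ℕ → ℕ, ValidSeq b k ∧ (UChain np b k).ncard = m} := by
  refine ⟨(vertexSet np).ncard, ?_⟩
  rintro m ⟨b, -, rfl⟩
  refine Set.ncard_le_ncard (fun v hv => ?_) (finite_vertexSet np)
  simp only [UChain, Set.mem_iUnion] at hv
  obtain ⟨i, -, hv⟩ := hv
  exact hv.1

theorem ncard_UChain_le_uMax (np : ℕ →₀ ℕ) {b : ℕ → ℕ} {k : ℕ} (hb : ValidSeq b k) :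
    (UChain np b k).ncard ≤ uMax np k :=
  le_csSup (bddAbove_uChainCards np k) ⟨b, hb, rfl⟩

theorem exists_ncard_UChain_eq_uMax (np : ℕ →₀ ℕ) (k : ℕ) :
    ∃ b : ℕ → ℕ, ValidSeq b k ∧ (UChain np b k).ncard = uMax np k :=
  Nat.sSup_mem (s := {m | ∃ b : ℕ → ℕ, ValidSeq b k ∧ (UChain np b k).ncard = m})
    ⟨_, _, validSeq_two_mul_sub_one k, rfl⟩ (bddAbove_uChainCards np k)

theorem uMax_zero (np : ℕ →₀ ℕ) : uMax np 0 = 0 := by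
  obtain ⟨b, -, hb⟩ := exists_ncard_UChain_eq_uMax np 0
  simp [← hb, UChain]

theorem sVal_sub_sVal_succ (np : ℕ →₀ ℕ) (v : ℕ) :
    (sVal np v : ℤ) - sVal np (v + 1) = v * ((np v : ℤ) - np (v + 2)) := by
  rw [sVal_eq_tail, sVal_eq_tail, tail_eq_add_tail_succ np (v + 1)]
  push_cast
  ring

namespace OptimalFor

variable {np : ℕ →₀ ℕ} {a : ℕ}

/-- Writing `F v` for the left-hand side, `F v = F (v + 1) + (n_v + n_{v+1}) - (n_a + n_{a+1})`
and `F a = s(P,a)`: going down from `a`, each step either decreases `F` or gives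
`F v ≤ s(P,v) ≤ s(P,a)`. -/
theorem sVal_add_mul_le (hopt : OptimalFor np a) {v : ℕ} (hv : 1 ≤ v) (hva : v ≤ a) :
    (sVal np v : ℤ) + (v - 1) * ((np a + np (a + 1) : ℤ) - (np v + np (v + 1))) ≤ sVal np a := by
  induction hd : a - v generalizing v with
  | zero =>
    obtain rfl : v = a := by omega
    simp
  | succ d ih =>
    have hnext := ih (v := v + 1) (by omega) (by omega) (by omega)
    have hrec := sVal_sub_sVal_succ np v
    have hopt_v : (sVal np v : ℤ) ≤ sVal np a := by exact_mod_cast hopt.2 v hv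
    have hv1 : (1 : ℤ) ≤ v := by exact_mod_cast hv
    push_cast at hnext
    rw [show v + 1 + 1 = v + 2 by ring] at hnext
    rcases le_or_gt ((np a + np (a + 1) : ℤ)) (np v + np (v + 1)) with hle | hlt
    · nlinarith
    · linarith

theorem add_pieceCard_le (hopt : OptimalFor np a) {i v : ℕ} (hi : 1 ≤ i) (hiv : 2 * i ≤ v + 1)
    (hv : 1 ≤ v) (hva : v ≤ a + 1) :
    2 * (i - 1) * (np a + np (a + 1)) + pieceCard np i v ≤ sVal np a := by
  have hpiece := pieceCard_add_eq_sVal np hi hiv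
  have hopt_v : (sVal np v : ℤ) ≤ sVal np a := by exact_mod_cast hopt.2 v hv
  zify [hi] at hpiece ⊢
  have hi' : (0 : ℤ) ≤ i - 1 := by linarith [show (1 : ℤ) ≤ i by exact_mod_cast hi]
  rcases le_or_gt ((np a + np (a + 1) : ℤ)) (np v + np (v + 1)) with hle | hlt
  · nlinarith
  rcases Nat.lt_or_ge v (a + 1) with hva' | hva'
  · have hF := hopt.sVal_add_mul_le hv (by omega)
    have : (2 * (i - 1) : ℤ) ≤ v - 1 := by
      have : 2 * i ≤ v + 1 := hiv
      push_cast [← Nat.cast_le (α := ℤ)] at this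
      linarith
    nlinarith
  · obtain rfl : v = a + 1 := by omega
    have hrec := sVal_sub_sVal_succ np a
    have : (2 * (i - 1) : ℤ) ≤ a := by
      have : 2 * i ≤ a + 1 + 1 := hiv
      push_cast [← Nat.cast_le (α := ℤ)] at this
      linarith
    rw [show a + 1 + 1 = a + 2 by ring] at hpiece hlt
    nlinarith

theorem exists_drop_index (hopt : OptimalFor np a)
    {b : ℕ → ℕ} {k t : ℕ} (hb : ValidSeq b k) (hk : 1 ≤ k) (htk : t ≤ k)
    (hlow : ∀ i, 1 ≤ i → i ≤ t → b i + 2 ≤ a) :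
    ∃ r, 1 ≤ r ∧ r ≤ max t 1 ∧
      (∀ i, r < i → i ≤ t → np a + np (a + 1) ≤ np (b i) + np (b i + 1)) ∧
      2 * (r - 1) * (np a + np (a + 1)) + pieceCard np r (b r) ≤ sVal np a := by
  classical
  obtain ⟨g, hg⟩ : ∃ g, Nat.findGreatest
      (fun i => np (b i) + np (b i + 1) < np a + np (a + 1)) t = g := ⟨_, rfl⟩
  have hgt : g ≤ t := hg ▸ Nat.findGreatest_le t
  refine ⟨max g 1, by omega, by omega, fun i hi hit => ?_, ?_⟩
  · have : ¬ np (b i) + np (b i + 1) < np a + np (a + 1) :=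
      Nat.findGreatest_is_greatest (P := fun i => np (b i) + np (b i + 1) < np a + np (a + 1))
        (by omega) hit
    omega
  · rcases Nat.eq_zero_or_pos t with rfl | ht
    · obtain rfl : g = 0 := by omega
      simpa [pieceCard_one] using hopt.2 _ (hb.1 1 le_rfl hk)
    · have hr : max g 1 ≤ t := by omega
      have := hlow (max g 1) (by omega) hr
      exact hopt.add_pieceCard_le (by omega) (hb.two_mul_le (by omega) (by omega))
        (hb.1 _ (by omega) (by omega)) (by omega)

end OptimalFor

def insertAt (c : ℕ → ℕ) (s x i : ℕ) : ℕ :=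
  if i ≤ s then c i else if i = s + 1 then x else c (i - 1) + 2

def deleteAt (b : ℕ → ℕ) (r t j : ℕ) : ℕ :=
  if j < r then b j else if j < t then b (j + 1) else b (j + 1) - 2

theorem ValidSeq.insertAt {c : ℕ → ℕ} {m s x : ℕ} (hc : ValidSeq c m) (hs : s ≤ m)
    (hx : 1 ≤ x) (hlo : 1 ≤ s → c s + 2 ≤ x) (hhi : s < m → x ≤ c (s + 1)) :
    ValidSeq (insertAt c s x) (m + 1) := by
  refine ⟨fun i hi him => ?_, fun i hi him => ?_⟩ <;> unfold _root_.insertAt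
  · split_ifs
    · exact hc.1 i hi (by omega)
    · exact hx
    · omega
  · split_ifs
    all_goals first
      | omega
      | exact hc.2 i hi (by omega)
      | (obtain rfl : i = s := (by omega); exact hlo hi)
      | (rw [show i + 1 - 1 = s + 1 by omega]; have := hhi (by omega); omega)
      | (have := hc.2 (i - 1) (by omega) (by omega)
         rw [Nat.sub_add_cancel (by omega)] at this
         rw [Nat.add_sub_cancel]; omega)

theorem ValidSeq.deleteAt {b : ℕ → ℕ} {m r t : ℕ} (hb : ValidSeq b (m + 1))
    (hrt : r ≤ t) (hbig : ∀ j, t ≤ j → j ≤ m → 3 ≤ b (j + 1))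
    (hjump : r < t → t ≤ m → b t + 4 ≤ b (t + 1)) :
    ValidSeq (deleteAt b r t) m := by
  refine ⟨fun j hj hjm => ?_, fun j hj hjm => ?_⟩ <;> unfold _root_.deleteAt
  · split_ifs
    · exact hb.1 j hj (by omega)
    · exact hb.1 (j + 1) (by omega) (by omega)
    · have := hbig j (by omega) hjm
      omega
  · have f1 := hb.2 j hj (by omega)
    have f2 := hb.2 (j + 1) (by omega) (by omega)
    split_ifs
    all_goals first
      | omega
      | (obtain rfl : t = j + 1 := (by omega); have := hjump (by omega) (by omega); omega)

section SeqEval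

variable {b : ℕ → ℕ} {s x r t i : ℕ}

theorem insertAt_of_le (hi : i ≤ s) : insertAt b s x i = b i := if_pos hi

theorem insertAt_succ : insertAt b s x (s + 1) = x := by simp [insertAt]

theorem insertAt_add_one (hi : s < i) : insertAt b s x (i + 1) = b i + 2 := by
  simp [insertAt, show ¬ i + 1 ≤ s by omega, show i ≠ s by omega]

theorem deleteAt_of_lt (hi : i < r) : deleteAt b r t i = b i := if_pos hi

theorem deleteAt_of_le_of_lt (hri : r ≤ i) (hit : i < t) : deleteAt b r t i = b (i + 1) := by
  simp [deleteAt, show ¬ i < r by omega, hit]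

theorem deleteAt_of_le_of_le (hri : r ≤ i) (hti : t ≤ i) :
    deleteAt b r t i = b (i + 1) - 2 := by
  simp [deleteAt, show ¬ i < r by omega, show ¬ i < t by omega]

end SeqEval

theorem Finset.sum_Icc_consecutive {M : Type*} [AddCommMonoid M] (f : ℕ → M) {s t n : ℕ}
    (hst : s ≤ t + 1) (htn : t ≤ n) :
    ∑ i ∈ Icc s n, f i = ∑ i ∈ Icc s t, f i + ∑ i ∈ Icc (t + 1) n, f i := by
  simp only [← Finset.Ico_add_one_right_eq_Icc]
  exact (sum_Ico_consecutive f hst (by omega)).symm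

theorem Finset.sum_Icc_add_one {M : Type*} [AddCommMonoid M] (f : ℕ → M) (s e : ℕ) :
    ∑ j ∈ Icc s e, f (j + 1) = ∑ i ∈ Icc (s + 1) (e + 1), f i := by
  rw [← map_add_right_Icc, sum_map]
  rfl

namespace IsUStep

variable {a : ℕ} {np np' : ℕ →₀ ℕ}

/-- Positions `≤ t` lose `2 (n_a + n_{a+1})` each, and position `j > e` of `c` matches
position `j + 1` of `b`; what remains are the middle stretches. -/
theorem sum_pieceCard_splice (h : IsUStep a np np') {b c : ℕ → ℕ} {m t e : ℕ} (hte : t ≤ e)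
    (hem : e ≤ m) (hlow : ∀ i, 1 ≤ i → i ≤ t → c i = b i ∧ b i + 2 ≤ a)
    (hhigh : ∀ j, e < j → j ≤ m → b (j + 1) = c j + 2 ∧ a ≤ c j) :
    ∑ i ∈ Icc 1 (m + 1), pieceCard np i (b i) + ∑ j ∈ Icc (t + 1) e, pieceCard np' j (c j) =
      ∑ j ∈ Icc 1 m, pieceCard np' j (c j) + 2 * t * (np a + np (a + 1)) +
        ∑ i ∈ Icc (t + 1) (e + 1), pieceCard np i (b i) := by
  have hlow_sum : ∑ i ∈ Icc 1 t, pieceCard np i (b i) =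
      ∑ i ∈ Icc 1 t, pieceCard np' i (c i) + 2 * t * (np a + np (a + 1)) := by
    have hconst : 2 * t * (np a + np (a + 1)) = ∑ _i ∈ Icc 1 t, 2 * (np a + np (a + 1)) := by
      rw [sum_const, Nat.card_Icc, Nat.add_sub_cancel, smul_eq_mul]
      ring
    rw [hconst, ← sum_add_distrib]
    refine sum_congr rfl fun i hi => ?_
    rw [mem_Icc] at hi
    obtain ⟨hci, hbi⟩ := hlow i hi.1 hi.2
    rw [hci, h.pieceCard_of_lt i hbi]
  have hhigh_sum : ∑ i ∈ Icc (e + 1 + 1) (m + 1), pieceCard np i (b i) =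
      ∑ j ∈ Icc (e + 1) m, pieceCard np' j (c j) := by
    rw [← sum_Icc_add_one]
    refine sum_congr rfl fun j hj => ?_
    rw [mem_Icc] at hj
    obtain ⟨hbj, hcj⟩ := hhigh j (by omega) hj.2
    rw [hbj, h.pieceCard_of_le j hcj]
  rw [sum_Icc_consecutive _ (by omega : 1 ≤ t + 1) (by omega : t ≤ m + 1),
    sum_Icc_consecutive _ (by omega : t + 1 ≤ e + 1 + 1) (by omega : e + 1 ≤ m + 1),
    sum_Icc_consecutive (fun j => pieceCard np' j (c j)) (by omega : 1 ≤ t + 1)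
      (by omega : t ≤ m),
    sum_Icc_consecutive (fun j => pieceCard np' j (c j)) (by omega : t + 1 ≤ e + 1)
      (by omega : e ≤ m), hlow_sum, hhigh_sum]
  ring

theorem sum_pieceCard_eq_of_single (h : IsUStep a np np') {b c : ℕ → ℕ} {m t : ℕ}
    (htm : t ≤ m) (hta : 2 * t + 1 ≤ a) (hlow : ∀ i, 1 ≤ i → i ≤ t → c i = b i ∧ b i + 2 ≤ a)
    (hb : b (t + 1) = a) (hhigh : ∀ j, t < j → j ≤ m → b (j + 1) = c j + 2 ∧ a ≤ c j) :
    ∑ i ∈ Icc 1 (m + 1), pieceCard np i (b i) =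
      sVal np a + ∑ j ∈ Icc 1 m, pieceCard np' j (c j) := by
  have hsplice := h.sum_pieceCard_splice le_rfl htm hlow hhigh
  have hpiece := pieceCard_add_eq_sVal np (i := t + 1) (v := a) (by omega) (by omega)
  rw [Icc_eq_empty (by omega : ¬t + 1 ≤ t), sum_empty, Icc_self, sum_singleton, hb] at hsplice
  rw [Nat.add_sub_cancel] at hpiece
  linarith

theorem sum_pieceCard_eq_of_pair (h : IsUStep a np np') {b c : ℕ → ℕ} {m t : ℕ}
    (htm : t + 1 ≤ m) (hta : 2 * t + 2 ≤ a) (hlow : ∀ i, 1 ≤ i → i ≤ t → c i = b i ∧ b i + 2 ≤ a)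
    (hb1 : b (t + 1) = a - 1) (hb2 : b (t + 2) = a + 1) (hc1 : c (t + 1) = a - 1)
    (hhigh : ∀ j, t + 1 < j → j ≤ m → b (j + 1) = c j + 2 ∧ a ≤ c j) :
    ∑ i ∈ Icc 1 (m + 1), pieceCard np i (b i) =
      sVal np a + ∑ j ∈ Icc 1 m, pieceCard np' j (c j) := by
  have hsplice := h.sum_pieceCard_splice (by omega) htm hlow hhigh
  rw [Icc_self, sum_singleton,
    sum_Icc_consecutive (s := t + 1) (t := t + 1) _ (by omega) (by omega), Icc_self,
    sum_singleton, Icc_self, sum_singleton, hb1, hc1, show t + 1 + 1 = t + 2 by ring,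
    hb2] at hsplice
  have hpair := h.pieceCard_pair hta
  linarith

theorem exists_insertion (h : IsUStep a np np') (ha : 1 ≤ a) {m : ℕ} {c : ℕ → ℕ}
    (hc : ValidSeq c m) :
    ∃ b, ValidSeq b (m + 1) ∧ ∑ i ∈ Icc 1 (m + 1), pieceCard np i (b i) =
      sVal np a + ∑ j ∈ Icc 1 m, pieceCard np' j (c j) := by
  obtain ⟨t, htm, hlow, hge⟩ := hc.exists_split a
  have hta : 2 * t + 1 ≤ a := by
    rcases Nat.eq_zero_or_pos t with rfl | ht
    · omega
    · have := hlow t ht le_rfl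
      have := hc.two_mul_le ht htm
      omega
  have hlow' : ∀ s x, t ≤ s → ∀ i, 1 ≤ i → i ≤ t →
      c i = insertAt c s x i ∧ insertAt c s x i + 2 ≤ a :=
    fun s x hts i hi hit => by
      rw [insertAt_of_le (by omega)]
      exact ⟨rfl, hlow i hi hit⟩
  by_cases hpair : t < m ∧ c (t + 1) = a - 1
  · obtain ⟨htm', hct⟩ := hpair
    have hup : ∀ j, t + 1 < j → j ≤ m → a + 1 ≤ c j := fun j hj hjm => by
      have := hc.add_two_mul_le (by omega) hj.le hjm
      omega
    have hta' : 2 * t + 2 ≤ a := by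
      have := hc.two_mul_le (by omega : 1 ≤ t + 1) htm'
      omega
    refine ⟨insertAt c (t + 1) (a + 1),
      hc.insertAt htm' (by omega) (fun _ => by omega) (fun h => hup _ (by omega) h), ?_⟩
    refine h.sum_pieceCard_eq_of_pair htm' hta' (hlow' _ _ (by omega)) ?_ ?_ hct ?_
    · rw [insertAt_of_le le_rfl, hct]
    · exact insertAt_succ
    · exact fun j hj hjm => ⟨insertAt_add_one hj, by have := hup j hj hjm; omega⟩
  · have hup : ∀ j, t < j → j ≤ m → a ≤ c j := fun j hj hjm => by
      have := hge (t + 1) (by omega) (by omega)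
      have := hc.add_two_mul_le (by omega) (by omega : t + 1 ≤ j) hjm
      have : c (t + 1) ≠ a - 1 := fun hct => hpair ⟨by omega, hct⟩
      omega
    refine ⟨insertAt c t a, hc.insertAt htm ha (fun ht => by have := hlow t ht le_rfl; omega)
      (fun h => hup _ (by omega) h), ?_⟩
    exact h.sum_pieceCard_eq_of_single htm hta (hlow' _ _ le_rfl) insertAt_succ
      fun j hj hjm => ⟨insertAt_add_one hj, hup j hj hjm⟩

/-- Drop position `r`: the low values after it move down one position, which by `htrail` does not
shrink their pieces, so the loss is the one bounded by `hloss`. -/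
theorem exists_drop (h : IsUStep a np np') (ha : 1 ≤ a) {m r t : ℕ} {b : ℕ → ℕ}
    (hb : ValidSeq b (m + 1)) (hr : 1 ≤ r) (hrt : r ≤ t) (ht : t ≤ m + 1)
    (hlow : ∀ i, 1 ≤ i → i ≤ t → i ≠ r → b i + 2 ≤ a)
    (hhigh : ∀ i, t < i → i ≤ m + 1 → a + 2 ≤ b i)
    (htrail : ∀ i, r < i → i ≤ t → np a + np (a + 1) ≤ np (b i) + np (b i + 1))
    (hloss : 2 * (r - 1) * (np a + np (a + 1)) + pieceCard np r (b r) ≤ sVal np a) :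
    ∃ c, ValidSeq c m ∧ ∑ i ∈ Icc 1 (m + 1), pieceCard np i (b i) ≤
      sVal np a + ∑ j ∈ Icc 1 m, pieceCard np' j (c j) := by
  have hvalid : ValidSeq (deleteAt b r t) m := by
    refine hb.deleteAt hrt (fun j hj hjm => ?_) fun hrt' htm => ?_
    · have := hhigh (j + 1) (by omega) (by omega)
      omega
    · have := hlow t (by omega) le_rfl (by omega)
      have := hhigh (t + 1) (by omega) (by omega)
      omega
  refine ⟨deleteAt b r t, hvalid, ?_⟩
  have hsplice := h.sum_pieceCard_splice (b := b) (c := deleteAt b r t) (m := m) (t := r - 1)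
    (e := t - 1) (by omega) (by omega)
    (fun i hi hir => ⟨deleteAt_of_lt (by omega), hlow i hi (by omega) (by omega)⟩)
    (fun j hj hjm => by
      have := hhigh (j + 1) (by omega) (by omega)
      rw [deleteAt_of_le_of_le (by omega) (by omega)]
      omega)
  have hmiddle : ∑ i ∈ Icc r t, pieceCard np i (b i) =
      pieceCard np r (b r) + ∑ j ∈ Icc r (t - 1), pieceCard np (j + 1) (b (j + 1)) := by
    rw [sum_Icc_consecutive (s := r) (t := r) (n := t) _ (by omega) hrt, Icc_self, sum_singleton,
      sum_Icc_add_one (fun i => pieceCard np i (b i)), Nat.sub_add_cancel (by omega)]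
  rw [Nat.sub_add_cancel hr, Nat.sub_add_cancel (by omega : 1 ≤ t), hmiddle] at hsplice
  have hshift : ∑ j ∈ Icc r (t - 1), pieceCard np (j + 1) (b (j + 1)) ≤
      ∑ j ∈ Icc r (t - 1), pieceCard np' j (deleteAt b r t j) := by
    refine sum_le_sum fun j hj => ?_
    rw [mem_Icc] at hj
    have hbj := hlow (j + 1) (by omega) (by omega) (by omega)
    have hstep := pieceCard_eq_succ_add np (i := j) (v := b (j + 1))
      (by have := hb.two_mul_le (i := j + 1) (by omega) (by omega); omega)
    have := h.pieceCard_of_lt j hbj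
    have := htrail (j + 1) (by omega) (by omega)
    rw [deleteAt_of_le_of_lt hj.1 (by omega)]
    omega
  omega

theorem exists_merge (h : IsUStep a np np') {m t : ℕ} {b : ℕ → ℕ} (hb : ValidSeq b (m + 1))
    (htm : t + 1 ≤ m) (hlow : ∀ i, 1 ≤ i → i ≤ t → b i + 2 ≤ a) (hb1 : b (t + 1) = a - 1)
    (hb2 : b (t + 2) = a + 1) :
    ∃ c, ValidSeq c m ∧ ∑ i ∈ Icc 1 (m + 1), pieceCard np i (b i) =
      sVal np a + ∑ j ∈ Icc 1 m, pieceCard np' j (c j) := by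
  have hup : ∀ j, t + 2 < j → j ≤ m + 1 → a + 3 ≤ b j := fun j hj hjm => by
    have := hb.add_two_mul_le (by omega : 1 ≤ t + 2) hj.le hjm
    omega
  have hta : 2 * t + 2 ≤ a := by
    have := hb.two_mul_le (by omega : 1 ≤ t + 1) (by omega)
    omega
  refine ⟨deleteAt b (t + 2) (t + 2),
    hb.deleteAt le_rfl (fun j hj hjm => by have := hup (j + 1) (by omega) (by omega); omega)
      (fun h => absurd h (lt_irrefl _)), ?_⟩
  refine h.sum_pieceCard_eq_of_pair htm hta
    (fun i hi hit => ⟨deleteAt_of_lt (by omega), hlow i hi hit⟩) hb1 hb2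
    (by rw [deleteAt_of_lt (by omega), hb1]) fun j hj hjm => ?_
  have := hup (j + 1) (by omega) (by omega)
  rw [deleteAt_of_le_of_le (by omega) (by omega)]
  omega

theorem exists_deletion (h : IsUStep a np np') (hopt : OptimalFor np a) {m : ℕ} {b : ℕ → ℕ}
    (hb : ValidSeq b (m + 1)) :
    ∃ c, ValidSeq c m ∧ ∑ i ∈ Icc 1 (m + 1), pieceCard np i (b i) ≤
      sVal np a + ∑ j ∈ Icc 1 m, pieceCard np' j (c j) := by
  have ha := hopt.1
  obtain ⟨t, htm, hlow, hge⟩ := hb.exists_split a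
  by_cases hmid : t ≤ m ∧ b (t + 1) ≤ a + 1
  · obtain ⟨htm', hbt⟩ := hmid
    have hbt' := hge (t + 1) (by omega) (by omega)
    by_cases hpair : t + 1 ≤ m ∧ b (t + 1) = a - 1 ∧ b (t + 2) = a + 1
    · obtain ⟨c, hc, heq⟩ := h.exists_merge hb hpair.1 hlow hpair.2.1 hpair.2.2
      exact ⟨c, hc, heq.le⟩
    have hup : ∀ i, t + 1 < i → i ≤ m + 1 → a + 2 ≤ b i := fun i hi him => by
      have h2 := hb.add_two_mul_le (by omega : 1 ≤ t + 1) (by omega : t + 1 ≤ t + 2) (by omega)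
      have hi2 := hb.add_two_mul_le (by omega : 1 ≤ t + 2) (by omega : t + 2 ≤ i) him
      have : ¬ (b (t + 1) = a - 1 ∧ b (t + 2) = a + 1) := fun hp => hpair ⟨by omega, hp⟩
      omega
    exact h.exists_drop ha hb (by omega) le_rfl (by omega)
      (fun i hi hit hir => hlow i hi (by omega)) hup (fun i hi hit => by omega)
      (hopt.add_pieceCard_le (by omega) (hb.two_mul_le (by omega) (by omega))
        (hb.1 (t + 1) (by omega) (by omega)) hbt)
  · have hup : ∀ i, t < i → i ≤ m + 1 → a + 2 ≤ b i := fun i hi him => by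
      have := hb.add_two_mul_le (by omega : 1 ≤ t + 1) hi him
      omega
    obtain ⟨r, hr, hrt, htrail, hloss⟩ := hopt.exists_drop_index hb (by omega) htm hlow
    exact h.exists_drop ha hb hr hrt (by omega)
      (fun i hi hit hir => hlow i hi (by omega)) (fun i hi him => hup i (by omega) him)
      (fun i hri hit => htrail i hri (by omega)) hloss

theorem uMax_succ (h : IsUStep a np np') (hopt : OptimalFor np a) (m : ℕ) :
    uMax np (m + 1) = sVal np a + uMax np' m := by
  apply le_antisymm
  · obtain ⟨b, hb, hbmax⟩ := exists_ncard_UChain_eq_uMax np (m + 1)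
    obtain ⟨c, hc, hle⟩ := h.exists_deletion hopt hb
    calc uMax np (m + 1) = ∑ i ∈ Icc 1 (m + 1), pieceCard np i (b i) := by
          rw [← hbmax, ncard_UChain np hb]
      _ ≤ sVal np a + (UChain np' c m).ncard := by rwa [ncard_UChain np' hc]
      _ ≤ sVal np a + uMax np' m := Nat.add_le_add_left (ncard_UChain_le_uMax np' hc) _
  · obtain ⟨c, hc, hcmax⟩ := exists_ncard_UChain_eq_uMax np' m
    obtain ⟨b, hb, heq⟩ := h.exists_insertion hopt.1 hc
    calc sVal np a + uMax np' m = ∑ i ∈ Icc 1 (m + 1), pieceCard np i (b i) := by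
          rw [heq, ← hcmax, ncard_UChain np' hc]
      _ = (UChain np b (m + 1)).ncard := (ncard_UChain np hb).symm
      _ ≤ uMax np (m + 1) := ncard_UChain_le_uMax np hb

end IsUStep

theorem IsUProcess.uMax_eq_sum {r : ℕ} {np : ℕ →₀ ℕ} {Ps : ℕ → ℕ →₀ ℕ} {aa : ℕ → ℕ}
    (hproc : IsUProcess r np Ps aa) {j k : ℕ} (hj : 1 ≤ j) (hjk : j + k ≤ r + 1) :
    uMax (Ps j) k = ∑ i ∈ range k, sVal (Ps (j + i)) (aa (j + i)) := by
  induction k generalizing j with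
  | zero => simp [uMax_zero]
  | succ k ih =>
    obtain ⟨hopt, hstep⟩ := hproc.2 j hj (by omega)
    rw [IsUStep.uMax_succ hstep hopt, ih (by omega) (by omega), sum_range_succ', add_zero,
      add_comm]
    simp only [add_comm 1, add_assoc]

theorem full_uprocess_gives_lambdaU_general
    (np : ℕ →₀ ℕ)
    (r : ℕ) (Ps : ℕ → ℕ →₀ ℕ) (aa : ℕ → ℕ) (hproc : IsUProcess r np Ps aa) :
    ∀ k, 1 ≤ k → k ≤ r → uMax np k = uMax np (k - 1) + sVal (Ps k) (aa k) := by
  intro k hk hkr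
  obtain ⟨m, rfl⟩ : ∃ m, k = m + 1 := ⟨k - 1, by omega⟩
  rw [← hproc.1, hproc.uMax_eq_sum (k := m + 1) le_rfl (by omega), Nat.add_sub_cancel,
    hproc.uMax_eq_sum (k := m) le_rfl (by omega), sum_range_succ, add_comm 1 m]

/-- Theorem 2.7, fullness: for a full `U`-process
`(P_1,…,P_{r+1}; a_1,…,a_r)` for `P`, one has `s(P_k, a_k) = u_k(P) − u_{k−1}(P)` for
`1 ≤ k ≤ r`; that is, the resulting sequence is `λ_U(P)`. -/
theorem full_uprocess_gives_lambdaU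
    (n : ℕ) (hn : 0 < n) (np : ℕ →₀ ℕ) (hP : IsPartitionOf n np)
    (r : ℕ) (Ps : ℕ → ℕ →₀ ℕ) (aa : ℕ → ℕ) (hproc : IsUProcess r np Ps aa)
    (hfull : ∀ m, Ps (r + 1) m = 0) :
    ∀ k, 1 ≤ k → k ≤ r → uMax np k = uMax np (k - 1) + sVal (Ps k) (aa k) :=
  full_uprocess_gives_lambdaU_general np r Ps aa hproc
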